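/- Let σ be a 3 2 1-avoiding permutation of {1,...,ℓ}, corresponding under the Robinson-Schensted correspondence to the pair (P, Q) of two-row standard tableaux. Then for each s with σ(s) < s, the entry s lies in the second row of the recording tableau Q if and only if there exists r < s with σ(r) > σ(s) and σ(r) > r, paired uniquely with s in the sense that the value σ(s) bumps σ(r) out of the first row during the insertion process. -/

import Mathlib

/-- A permutation `σ` of `{1,…,ℓ}` (modeled as `Fin ℓ`) is `3 2 1`-avoiding if there do not
exist `a < b < c` with `σ c < σ b < σ a`. -/
def Avoids321 {ℓ : ℕ} (σ : Equiv.Perm (Fin ℓ)) : Prop :=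
  ¬ ∃ a b c : Fin ℓ, a < b ∧ b < c ∧ σ c < σ b ∧ σ b < σ a

/-- Robinson–Schensted row insertion of `x` into a single row: `x` is appended at the end
if it is larger than all entries; otherwise it replaces (bumps) the smallest entry `y > x`.
Returns the new row together with the bumped entry, if any. -/
def rowInsert (x : ℕ) : List ℕ → List ℕ × Option ℕ
  | [] => ([x], none)
  | y :: ys =>
    if x < y then (x :: ys, some y)
    else
      let p := rowInsert x ys
      (y :: p.1, p.2)

/-- Robinson–Schensted insertion of `x` into a tableau (a list of rows): insert into the
first row; a bumped entry is inserted into the subsequent rows. Returns the new tableau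
together with the (0-indexed) row in which the new box was created. -/
def insertTableau (x : ℕ) : List (List ℕ) → List (List ℕ) × ℕ
  | [] => ([[x]], 0)
  | r :: rest =>
    match rowInsert x r with
    | (r', none) => (r' :: rest, 0)
    | (r', some y) =>
      let p := insertTableau y rest
      (r' :: p.1, p.2 + 1)

/-- Robinson–Schensted insertion of a word: returns the insertion tableau `P` together with
the list whose `s`-th entry (0-indexed) is the row of `P` in which the box created at step
`s` appears — equivalently, the row of the recording tableau `Q` containing entry `s+1`. -/
def RSsteps (w : List ℕ) : List (List ℕ) × List ℕ :=
  w.foldl (fun p x => let q := insertTableau x p.1; (q.1, p.2 ++ [q.2])) ([], [])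

/-- The word of a permutation `σ` of `Fin ℓ`: `σ(1), σ(2), …, σ(ℓ)`. -/
def permWord {ℓ : ℕ} (σ : Equiv.Perm (Fin ℓ)) : List ℕ :=
  List.ofFn fun i => (σ i : ℕ)

/-!
For a `3 2 1`-avoiding `σ`, insertion never bumps in the second row. By induction on the
prefix, an entry of the first row lying below some entry of the second row is smaller than
every value still to be inserted: such a pair arises only when the inserted value `σ(c)` has a
larger value before it, and then `3 2 1`-avoidance makes every later value exceed `σ(c)`. So a
value bumped by `σ(s)` out of the first row exceeds the whole second row, and the box of step
`s` lies in the second row exactly when `σ(s)` bumps some `σ(r)` with `r < s`, `σ(s) < σ(r)`;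
such an `r` is an excedance by a pigeonhole count.
-/
section rowInsert

variable {x : ℕ}

theorem rowInsert_snd_eq_none_iff {l : List ℕ} :
    (rowInsert x l).2 = none ↔ ∀ z ∈ l, z ≤ x := by
  induction l with
  | nil => simp [rowInsert]
  | cons y ys ih =>
    by_cases hxy : x < y
    · simp [rowInsert, hxy]
    · simp [rowInsert, hxy, ih]
      omega

theorem rowInsert_fst_of_snd_eq_none {l : List ℕ} (h : (rowInsert x l).2 = none) :
    (rowInsert x l).1 = l ++ [x] := by
  induction l with
  | nil => rfl
  | cons y ys ih =>
    by_cases hxy : x < y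
    · simp [rowInsert, hxy] at h
    · simp only [rowInsert, if_neg hxy] at h ⊢
      simp [ih h]

theorem rowInsert_snd_eq_some {l : List ℕ} {y : ℕ} (h : (rowInsert x l).2 = some y) :
    ∃ l₁ l₂, l = l₁ ++ y :: l₂ ∧ (rowInsert x l).1 = l₁ ++ x :: l₂ ∧
      (∀ z ∈ l₁, z ≤ x) ∧ x < y := by
  induction l with
  | nil => simp [rowInsert] at h
  | cons a as ih =>
    by_cases hxa : x < a
    · simp only [rowInsert, if_pos hxa, Option.some.injEq] at h ⊢
      exact ⟨[], as, by simp [h], rfl, by simp, h ▸ hxa⟩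
    · simp only [rowInsert, if_neg hxa] at h ⊢
      obtain ⟨l₁, l₂, rfl, hrow, hle, hxy⟩ := ih h
      exact ⟨a :: l₁, l₂, rfl, by simp [hrow], by simpa using ⟨not_lt.1 hxa, hle⟩, hxy⟩

end rowInsert

theorem RSsteps_append_singleton (u : List ℕ) (x : ℕ) :
    RSsteps (u ++ [x]) =
      ((insertTableau x (RSsteps u).1).1,
        (RSsteps u).2 ++ [(insertTableau x (RSsteps u).1).2]) := by
  simp [RSsteps, List.foldl_append]

theorem RSsteps_snd_length (w : List ℕ) : (RSsteps w).2.length = w.length := by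
  induction w using List.reverseRecOn with
  | nil => rfl
  | append_singleton u x ih => simp [RSsteps_append_singleton, ih]

theorem RSsteps_snd_prefix (u v : List ℕ) : (RSsteps u).2 <+: (RSsteps (u ++ v)).2 := by
  induction v using List.reverseRecOn with
  | nil => simp
  | append_singleton v x ih =>
    rw [← List.append_assoc, RSsteps_append_singleton]
    exact ih.trans (List.prefix_append _ _)

theorem RSsteps_snd_getElem (w : List ℕ) (n : ℕ) (hn : n < w.length) :
    (RSsteps w).2[n]'(by simpa [RSsteps_snd_length]) =
      (insertTableau w[n] (RSsteps (w.take n)).1).2 := by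
  have hpre := RSsteps_snd_prefix (w.take (n + 1)) (w.drop (n + 1))
  rw [List.take_append_drop, List.take_succ_eq_append_getElem hn,
    RSsteps_append_singleton] at hpre
  rw [← hpre.getElem (by simp [RSsteps_snd_length, Nat.min_eq_left hn.le])]
  simp [RSsteps_snd_length, Nat.min_eq_left hn.le]

theorem insertTableau_of_rowInsert_none {x : ℕ} {T : List (List ℕ)}
    (h : (rowInsert x (T.headD [])).2 = none) :
    insertTableau x T = ((rowInsert x (T.headD [])).1 :: T.tail, 0) := by
  cases T with
  | nil => rfl
  | cons R rest =>
    rcases hR : rowInsert x R with ⟨R', _ | y⟩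
    · simp [insertTableau, hR]
    · simp [hR] at h

theorem insertTableau_of_rowInsert_some {x y : ℕ} {T : List (List ℕ)}
    (hx : (rowInsert x (T.headD [])).2 = some y) (hy : (rowInsert y (T.tail.headD [])).2 = none) :
    insertTableau x T =
      ((rowInsert x (T.headD [])).1 :: (rowInsert y (T.tail.headD [])).1 :: T.drop 2, 1) := by
  cases T with
  | nil => simp [rowInsert] at hx
  | cons R rest =>
    rcases hR : rowInsert x R with ⟨R', _ | y'⟩
    · simp [hR] at hx
    · obtain rfl : y' = y := by simpa [hR] using hx
      simp only [List.tail_cons] at hy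
      simp [insertTableau, hR, insertTableau_of_rowInsert_none hy]

namespace Avoids321

variable {ℓ : ℕ} {σ : Equiv.Perm (Fin ℓ)}

theorem apply_lt_apply (hσ : Avoids321 σ) {a b c : Fin ℓ} (hab : a < b) (hbc : b < c)
    (hba : σ b < σ a) : σ b < σ c :=
  lt_of_le_of_ne (le_of_not_gt fun hcb => hσ ⟨a, b, c, hab, hbc, hcb, hba⟩)
    (σ.injective.ne hbc.ne)

theorem lt_apply_of_lt (hσ : Avoids321 σ) {r s : Fin ℓ} (hrs : r < s) (hsr : σ s < σ r) :
    r < σ r := by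
  -- pigeonhole: `σ` maps the `r + 1` points of `insert s (Iio r)` into `Iio (σ r)`
  have hmaps : Set.MapsTo σ (insert s (Finset.Iio r) : Finset (Fin ℓ)) (Finset.Iio (σ r)) := by
    intro t ht
    simp only [Finset.coe_insert, Finset.coe_Iio, Set.mem_insert_iff, Set.mem_Iio] at ht ⊢
    rcases ht with rfl | htr
    · exact hsr
    · exact lt_of_le_of_ne (le_of_not_gt fun hrt => hσ ⟨t, r, s, htr, hrs, hsr, hrt⟩)
        (σ.injective.ne htr.ne)
  have hcard := Finset.card_le_card_of_injOn σ hmaps σ.injective.injOn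
  rw [Finset.card_insert_of_notMem (by simpa using hrs.le), Fin.card_Iio, Fin.card_Iio] at hcard
  exact hcard

end Avoids321

section permWord

variable {ℓ : ℕ} (σ : Equiv.Perm (Fin ℓ))

theorem permWord_take_succ (c : Fin ℓ) :
    (permWord σ).take (c + 1) = (permWord σ).take c ++ [(σ c : ℕ)] := by
  rw [List.take_succ_eq_append_getElem (by simp [permWord])]
  simp [permWord]

theorem RSsteps_snd_getD_permWord (c : Fin ℓ) (d : ℕ) :
    (RSsteps (permWord σ)).2.getD c d =
      (insertTableau (σ c) (RSsteps ((permWord σ).take c)).1).2 := by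
  have hc : (c : ℕ) < (permWord σ).length := by simp [permWord]
  rw [List.getD_eq_getElem?_getD, List.getElem?_eq_getElem (by simpa [RSsteps_snd_length]),
    RSsteps_snd_getElem _ _ hc]
  simp [permWord]

end permWord

/-- `R₁`, `R₂`: the first two rows of the insertion tableau of `σ 0, …, σ (n-1)`. -/
structure RSInvariant {ℓ : ℕ} (σ : Equiv.Perm (Fin ℓ)) (n : ℕ) (R₁ R₂ : List ℕ) :
    Prop where
  pairwise_lt : R₁.Pairwise (· < ·)
  exists_of_mem : ∀ v ∈ R₁ ++ R₂, ∃ a : Fin ℓ, (a : ℕ) < n ∧ (σ a : ℕ) = v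
  lt_of_lt : ∀ y ∈ R₁, ∀ z ∈ R₂, y < z → ∀ c : Fin ℓ, n ≤ c → y < σ c

namespace RSInvariant

variable {ℓ : ℕ} {σ : Equiv.Perm (Fin ℓ)} {R₁ R₂ : List ℕ} {c : Fin ℓ}

theorem apply_notMem (h : RSInvariant σ c R₁ R₂) : (σ c : ℕ) ∉ R₁ := fun hc => by
  obtain ⟨a, hac, ha⟩ := h.exists_of_mem _ (List.mem_append_left _ hc)
  exact absurd (σ.injective (Fin.ext ha)) (Fin.ne_of_lt hac)

theorem exists_of_mem_cons (h : RSInvariant σ c R₁ R₂) {v : ℕ}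
    (hv : v ∈ (σ c : ℕ) :: (R₁ ++ R₂)) :
    ∃ a : Fin ℓ, (a : ℕ) < c + 1 ∧ (σ a : ℕ) = v := by
  rcases List.mem_cons.1 hv with rfl | hv
  · exact ⟨c, by omega, rfl⟩
  · obtain ⟨a, hac, rfl⟩ := h.exists_of_mem v hv
    exact ⟨a, by omega, rfl⟩

theorem apply_lt_apply_of_lt (hσ : Avoids321 σ) (h : RSInvariant σ c R₁ R₂) {v : ℕ}
    (hv : v ∈ R₁ ++ R₂) (hcv : (σ c : ℕ) < v) {d : Fin ℓ} (hcd : c < d) :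
    σ c < σ d := by
  obtain ⟨a, hac, rfl⟩ := h.exists_of_mem v hv
  exact hσ.apply_lt_apply hac hcd hcv

theorem rowInsert_eq_none {y : ℕ} (h : RSInvariant σ c R₁ R₂)
    (hy : (rowInsert (σ c) R₁).2 = some y) : (rowInsert y R₂).2 = none := by
  obtain ⟨l₁, l₂, rfl, -, -, hcy⟩ := rowInsert_snd_eq_some hy
  refine rowInsert_snd_eq_none_iff.2 fun z hz => le_of_not_gt fun hyz => ?_
  have := h.lt_of_lt y (by simp) z hz hyz c le_rfl
  omega

theorem append_singleton (hσ : Avoids321 σ) (h : RSInvariant σ c R₁ R₂)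
    (hle : ∀ z ∈ R₁, z ≤ σ c) : RSInvariant σ (c + 1) (R₁ ++ [(σ c : ℕ)]) R₂ where
  pairwise_lt := by
    refine List.pairwise_append.2 ⟨h.pairwise_lt, List.pairwise_singleton _ _, ?_⟩
    intro v hv b hb
    obtain rfl := List.mem_singleton.1 hb
    exact lt_of_le_of_ne (hle v hv) fun e => h.apply_notMem (e ▸ hv)
  exists_of_mem v hv := h.exists_of_mem_cons (by simp at hv ⊢; tauto)
  lt_of_lt u hu z hz huz d hd := by
    rcases List.mem_append.1 hu with hu | hu
    · exact h.lt_of_lt u hu z hz huz d (by omega)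
    · obtain rfl := List.mem_singleton.1 hu
      exact h.apply_lt_apply_of_lt hσ (List.mem_append_right _ hz) huz (Fin.lt_def.2 hd)

theorem bump (hσ : Avoids321 σ) {l₁ l₂ : List ℕ} {y : ℕ}
    (h : RSInvariant σ c (l₁ ++ y :: l₂) R₂) (hle : ∀ z ∈ l₁, z ≤ σ c)
    (hcy : (σ c : ℕ) < y) :
    RSInvariant σ (c + 1) (l₁ ++ (σ c : ℕ) :: l₂) (R₂ ++ [y]) := by
  obtain ⟨hl₁, ⟨hyl₂, hl₂⟩, hcross⟩ := by
    simpa only [List.pairwise_append, List.pairwise_cons] using h.pairwise_lt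
  have hcd {d : Fin ℓ} (hd : (c : ℕ) + 1 ≤ d) : σ c < σ d :=
    h.apply_lt_apply_of_lt hσ (by simp) hcy (Fin.lt_def.2 hd)
  refine ⟨?_, fun v hv => h.exists_of_mem_cons (by simp at hv ⊢; tauto), ?_⟩
  · refine List.pairwise_append.2
      ⟨hl₁, List.pairwise_cons.2 ⟨fun b hb => hcy.trans (hyl₂ b hb), hl₂⟩, ?_⟩
    intro a ha b hb
    rcases List.mem_cons.1 hb with rfl | hb
    · exact lt_of_le_of_ne (hle a ha) fun e => h.apply_notMem (by simp [← e, ha])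
    · exact hcross a ha b (List.mem_cons_of_mem _ hb)
  · intro u hu z hz huz d hd
    simp only [List.mem_append, List.mem_cons, List.mem_nil_iff, or_false] at hu hz
    rcases hu with hu | rfl | hu <;> rcases hz with hz | rfl
    · exact h.lt_of_lt u (by simp [hu]) z hz huz d (by omega)
    · exact (hle u hu).trans_lt (hcd hd)
    · exact h.apply_lt_apply_of_lt hσ (by simp [hz]) huz (Fin.lt_def.2 hd)
    · exact hcd hd
    · exact h.lt_of_lt u (by simp [hu]) z hz huz d (by omega)
    · exact absurd (hyl₂ u hu) huz.not_gt

variable {T : List (List ℕ)}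

theorem insertTableau (hσ : Avoids321 σ) (h : RSInvariant σ c (T.headD []) (T.tail.headD [])) :
    RSInvariant σ (c + 1) ((_root_.insertTableau (σ c) T).1.headD [])
      ((_root_.insertTableau (σ c) T).1.tail.headD []) := by
  rcases hb : (rowInsert (σ c) (T.headD [])).2 with _ | y
  · rw [insertTableau_of_rowInsert_none hb, List.headD_cons, List.tail_cons,
      rowInsert_fst_of_snd_eq_none hb]
    exact h.append_singleton hσ (rowInsert_snd_eq_none_iff.1 hb)
  · have h₂ := h.rowInsert_eq_none hb
    obtain ⟨l₁, l₂, hl, hrow, hle, hcy⟩ := rowInsert_snd_eq_some hb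
    rw [insertTableau_of_rowInsert_some hb h₂, List.headD_cons, List.tail_cons, List.headD_cons,
      hrow, rowInsert_fst_of_snd_eq_none h₂]
    exact (hl ▸ h).bump hσ hle hcy

theorem insertTableau_snd_eq_one_iff (h : RSInvariant σ c (T.headD []) (T.tail.headD [])) :
    (_root_.insertTableau (σ c) T).2 = 1 ↔
      ∃ y, (rowInsert (σ c) (T.headD [])).2 = some y := by
  rcases hb : (rowInsert (σ c) (T.headD [])).2 with _ | y
  · simp [insertTableau_of_rowInsert_none hb]
  · simp [insertTableau_of_rowInsert_some hb (h.rowInsert_eq_none hb)]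

end RSInvariant

theorem Avoids321.rsInvariant_RSsteps_take {ℓ : ℕ} {σ : Equiv.Perm (Fin ℓ)}
    (hσ : Avoids321 σ) {n : ℕ} (hn : n ≤ ℓ) :
    RSInvariant σ n ((RSsteps ((permWord σ).take n)).1.headD [])
      ((RSsteps ((permWord σ).take n)).1.tail.headD []) := by
  induction n with
  | zero => exact ⟨by simp [RSsteps], by simp [RSsteps], by simp [RSsteps]⟩
  | succ n ih =>
    have hstep := (ih (by omega)).insertTableau hσ (c := ⟨n, hn⟩)
    rwa [permWord_take_succ σ ⟨n, hn⟩, RSsteps_append_singleton]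

theorem stmt_19_general {ℓ : ℕ} (σ : Equiv.Perm (Fin ℓ)) (hσ : Avoids321 σ)
    (s : Fin ℓ) :
    (RSsteps (permWord σ)).2.getD (s : ℕ) 5 = 1 ↔
      ∃! r : Fin ℓ, r < s ∧ σ s < σ r ∧ r < σ r ∧
        (rowInsert (σ s : ℕ) (((RSsteps ((permWord σ).take s)).1).headD [])).2
          = some (σ r : ℕ) := by
  have hP := hσ.rsInvariant_RSsteps_take s.isLt.le
  rw [RSsteps_snd_getD_permWord, hP.insertTableau_snd_eq_one_iff]
  constructor
  · rintro ⟨y, hy⟩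
    obtain ⟨l₁, l₂, hl, -, -, hsy⟩ := rowInsert_snd_eq_some hy
    obtain ⟨r, hrs, rfl⟩ := hP.exists_of_mem y (by rw [hl]; simp)
    refine ⟨r, ⟨hrs, hsy, hσ.lt_apply_of_lt hrs hsy, hy⟩, fun r' hr' => ?_⟩
    exact σ.injective (Fin.ext (Option.some_injective _ (hr'.2.2.2.symm.trans hy)))
  · rintro ⟨r, ⟨-, -, -, hr⟩, -⟩
    exact ⟨_, hr⟩

/-- For a `3 2 1`-avoiding `σ` and a deficiency `s` (i.e. `σ(s) < s`), the entry `s` lies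
in the second row of the recording tableau if and only if there is a unique excedance
`r < s` with `σ(r) > σ(s)` such that at step `s` of the insertion process the value `σ(s)`
bumps `σ(r)` out of the first row.  (Such `(r,s)` is an RS pair.) -/
theorem stmt_19 {ℓ : ℕ} (σ : Equiv.Perm (Fin ℓ)) (hσ : Avoids321 σ)
    (s : Fin ℓ) (hs : σ s < s) :
    (RSsteps (permWord σ)).2.getD (s : ℕ) 5 = 1 ↔
      ∃! r : Fin ℓ, r < s ∧ σ s < σ r ∧ r < σ r ∧
        (rowInsert (σ s : ℕ) (((RSsteps ((permWord σ).take s)).1).headD [])).2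
          = some (σ r : ℕ) :=
  stmt_19_general σ hσ s
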